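/- There exists a universal constant c > 0 with the following property. Let 1 ≤ p < p₀ ≤ ∞, and let N ∈ 𝒩 be such that t ↦ N(t)^{1/α}/t is non-decreasing on (0,∞) for some α > 0. Then for every t > 0: ( ∫_t^∞ ds / ((s−t)^{p/p₀} · N^∧(s)^p) )^{1/p} ≤ c · 2^{1/α} · (1 − p/p₀)^{−1/p} · ( ∫_t^∞ ds / (s^{p/p₀} · N^∧(s)^p) )^{1/p} (with p/p₀ read as 0 when p₀ = ∞). -/

import Mathlib

open MeasureTheory Filter Set Metric
open scoped ENNReal NNReal Topology

noncomputable section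

/-- The class 𝒩 of continuous increasing functions mapping ℝ₊ onto ℝ₊. -/
structure MemN (N : ℝ → ℝ) : Prop where
  contOn : ContinuousOn N (Ici 0)
  strictMonoOn : StrictMonoOn N (Ici 0)
  mapsTo : MapsTo N (Ici 0) (Ici 0)
  surjOn : SurjOn N (Ici 0) (Ici 0)

/-- A Young function: convex, increasing, vanishing at 0. -/
structure IsYoung (N : ℝ → ℝ) : Prop where
  convexOn : ConvexOn ℝ (Ici 0) N
  strictMonoOn : StrictMonoOn N (Ici 0)
  zero : N 0 = 0

/-- The (generalized) inverse `N⁻¹` of `N : ℝ₊ → ℝ₊`. -/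
def ninv (N : ℝ → ℝ) (y : ℝ) : ℝ := sInf {t : ℝ | 0 ≤ t ∧ y ≤ N t}

/-- The adjoint function `N^∧(t) = 1 / N⁻¹(1/t)`. -/
def nwedge (N : ℝ → ℝ) (t : ℝ) : ℝ := 1 / ninv N (1 / t)

variable {Ω : Type*}

/-- The class ℱ of functions which are Lipschitz on every ball. -/
def LipschitzOnBalls [PseudoMetricSpace Ω] (f : Ω → ℝ) : Prop :=
  ∀ (x : Ω) (r : ℝ), ∃ K : ℝ≥0, LipschitzOnWith K f (Metric.ball x r)

/-- The modulus of the gradient `|∇f|(x)` (equal to 0 at isolated points). -/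
def gradNorm [PseudoMetricSpace Ω] (f : Ω → ℝ) (x : Ω) : ℝ :=
  limsup (fun y => |f y - f x| / dist y x) (𝓝[≠] x)

/-- `‖ |∇f| ‖_{L_q(μ)}`. -/
def gradLqNorm [PseudoMetricSpace Ω] [MeasurableSpace Ω] (μ : Measure Ω) (q : ℝ≥0∞)
    (f : Ω → ℝ) : ℝ≥0∞ :=
  eLpNorm (gradNorm f) q μ

/-- The Orlicz (quasi-)norm `‖f‖_{N(μ)}`. -/
def orliczNorm [MeasurableSpace Ω] (μ : Measure Ω) (N : ℝ → ℝ) (f : Ω → ℝ) : ℝ :=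
  sInf {v : ℝ | 0 < v ∧ ∫⁻ x, ENNReal.ofReal (N (|f x| / v)) ∂μ ≤ 1}

/-- The dual norm `‖f‖_{N(μ)*}`. -/
def dualOrliczNorm [MeasurableSpace Ω] (μ : Measure Ω) (N : ℝ → ℝ) (f : Ω → ℝ) : ℝ :=
  sSup {r : ℝ | ∃ g : Ω → ℝ, orliczNorm μ N g ≤ 1 ∧ r = ∫ x, f x * g x ∂μ}

/-- The weak Orlicz quasi-norm `‖f‖_{N(μ),∞} = sup_{t>0} N^∧(μ{|f|≥t})·t`. -/
def weakOrliczNorm [MeasurableSpace Ω] (μ : Measure Ω) (N : ℝ → ℝ) (f : Ω → ℝ) : ℝ :=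
  sSup {r : ℝ | ∃ t : ℝ, 0 < t ∧ r = nwedge N ((μ {x | t ≤ |f x|}).toReal) * t}

/-- `m` is a median of `f` under `μ`. -/
def IsMedian [MeasurableSpace Ω] (μ : Measure Ω) (f : Ω → ℝ) (m : ℝ) : Prop :=
  (1 / 2 : ℝ≥0∞) ≤ μ {x | m ≤ f x} ∧ (1 / 2 : ℝ≥0∞) ≤ μ {x | f x ≤ m}

/-- Minkowski's exterior boundary measure `μ⁺(A)`. -/
def boundaryMeasure [PseudoMetricSpace Ω] [MeasurableSpace Ω] (μ : Measure Ω) (A : Set Ω) :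
    ℝ≥0∞ :=
  liminf (fun ε : ℝ => (μ (Metric.thickening ε A) - μ A) / ENNReal.ofReal ε) (𝓝[>] (0 : ℝ))

/-- The isoperimetric profile `I(t)`: the maximal function with `μ⁺(A) ≥ I(μ(A))`. -/
def isoProfile [PseudoMetricSpace Ω] [MeasurableSpace Ω] (μ : Measure Ω) (t : ℝ) : ℝ≥0∞ :=
  ⨅ (A : Set Ω) (_ : MeasurableSet A) (_ : μ A = ENNReal.ofReal t), boundaryMeasure μ A

/-- `Ĩ(t) = min(I(t), I(1-t))`. -/
def tildeIsoProfile [PseudoMetricSpace Ω] [MeasurableSpace Ω] (μ : Measure Ω) (t : ℝ) : ℝ≥0∞ :=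
  min (isoProfile μ t) (isoProfile μ (1 - t))

/-- The `q`-capacity `Cap_q(a,b)`. -/
def capacity [PseudoMetricSpace Ω] [MeasurableSpace Ω] (μ : Measure Ω) (q a b : ℝ) : ℝ≥0∞ :=
  ⨅ (Φ : Ω → ℝ) (_ : LipschitzOnBalls Φ) (_ : ∀ x, Φ x ∈ Icc (0 : ℝ) 1)
    (_ : ENNReal.ofReal a ≤ μ {x | Φ x = 1}) (_ : ENNReal.ofReal (1 - b) ≤ μ {x | Φ x = 0}),
    gradLqNorm μ (ENNReal.ofReal q) Φ

/-- A log-concave function (of the form exp(-ψ) with ψ convex, ℝ ∪ {+∞} valued). -/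
def IsLogConcaveFn {E : Type*} [AddCommGroup E] [Module ℝ E] (f : E → ℝ) : Prop :=
  (∀ x, 0 ≤ f x) ∧
    ∀ x y : E, ∀ a b : ℝ, 0 ≤ a → 0 ≤ b → a + b = 1 → f x ^ a * f y ^ b ≤ f (a • x + b • y)

/-- An absolutely continuous log-concave measure on Euclidean space. -/
def IsLogConcaveMeasure {n : ℕ} (μ : Measure (EuclideanSpace ℝ (Fin n))) : Prop :=
  ∃ f : EuclideanSpace ℝ (Fin n) → ℝ, IsLogConcaveFn f ∧
    μ = volume.withDensity fun x => ENNReal.ofReal (f x)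

/-! Write `θ = p/p₀ ∈ [0, 1)` and split `∫_t^∞` at `2t`. For `s > 2t` we have `s ≤ 2(s - t)`, so
there the shifted integrand is at most `2^θ ≤ 2` times the unshifted one. On `(t, 2t]`, monotonicity
of `N^∧` bounds the shifted integral by `t^{1-θ} / ((1-θ) N^∧(t)^p)`, while the unshifted one is at
least `t / ((2t)^θ N^∧(2t)^p)`; the two are comparable because the monotonicity of `N(t)^{1/α}/t`
gives `N(λu) ≤ λ^α N(u)` for `λ ≤ 1`, hence the doubling bound `N^∧(2t) ≤ 2^{1/α} N^∧(t)`. -/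

namespace MemN

variable {N : ℝ → ℝ}

theorem map_zero (hN : MemN N) : N 0 = 0 := by
  obtain ⟨x, hx, hNx⟩ := hN.surjOn (self_mem_Ici : (0 : ℝ) ∈ Ici 0)
  exact le_antisymm (hNx ▸ hN.strictMonoOn.monotoneOn self_mem_Ici hx hx)
    (hN.mapsTo self_mem_Ici)

theorem ninv_apply_self (hN : MemN N) {x : ℝ} (hx : 0 ≤ x) : ninv N (N x) = x := by
  refine IsLeast.csInf_eq ⟨⟨hx, le_rfl⟩, fun s ⟨hs, hNs⟩ => ?_⟩
  exact (hN.strictMonoOn.le_iff_le hx hs).mp hNs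

theorem ninv_nonneg (hN : MemN N) {y : ℝ} (hy : 0 ≤ y) : 0 ≤ ninv N y := by
  obtain ⟨x, hx, rfl⟩ := hN.surjOn hy
  rwa [hN.ninv_apply_self hx]

theorem apply_ninv_self (hN : MemN N) {y : ℝ} (hy : 0 ≤ y) : N (ninv N y) = y := by
  obtain ⟨x, hx, rfl⟩ := hN.surjOn hy
  rw [hN.ninv_apply_self hx]

theorem le_ninv_of_apply_le (hN : MemN N) {x y : ℝ} (hx : 0 ≤ x) (hy : 0 ≤ y)
    (hxy : N x ≤ y) : x ≤ ninv N y := by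
  rw [← hN.apply_ninv_self hy] at hxy
  exact (hN.strictMonoOn.le_iff_le hx (hN.ninv_nonneg hy)).mp hxy

theorem ninv_pos (hN : MemN N) {y : ℝ} (hy : 0 < y) : 0 < ninv N y := by
  refine (hN.ninv_nonneg hy.le).lt_of_ne fun h => hy.ne ?_
  rw [← hN.apply_ninv_self hy.le, ← h, hN.map_zero]

theorem ninv_le_ninv (hN : MemN N) {y y' : ℝ} (hy : 0 ≤ y) (hyy' : y ≤ y') :
    ninv N y ≤ ninv N y' :=
  hN.le_ninv_of_apply_le (hN.ninv_nonneg hy) (hy.trans hyy')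
    ((hN.apply_ninv_self hy).trans_le hyy')

theorem nwedge_pos (hN : MemN N) {s : ℝ} (hs : 0 < s) : 0 < nwedge N s :=
  one_div_pos.mpr (hN.ninv_pos (one_div_pos.mpr hs))

theorem monotoneOn_nwedge (hN : MemN N) : MonotoneOn (nwedge N) (Ioi 0) := by
  intro s hs s' _ hss'
  have hs' : 0 < 1 / s' := one_div_pos.mpr (hs.trans_le hss')
  exact one_div_le_one_div_of_le (hN.ninv_pos hs')
    (hN.ninv_le_ninv hs'.le (one_div_le_one_div_of_le hs hss'))

theorem apply_mul_le (hN : MemN N) {α : ℝ} (hα : 0 < α)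
    (hm : MonotoneOn (fun t => N t ^ (1 / α) / t) (Ioi 0)) {l u : ℝ} (hl : 0 < l) (hl1 : l ≤ 1)
    (hu : 0 < u) : N (l * u) ≤ l ^ α * N u := by
  have hNlu := hN.mapsTo (mem_Ici.mpr (mul_pos hl hu).le)
  have hNu := hN.mapsTo (mem_Ici.mpr hu.le)
  have hroot : N (l * u) ^ (1 / α) ≤ l * N u ^ (1 / α) := by
    have := hm (mul_pos hl hu) hu (mul_le_of_le_one_left hu.le hl1)
    rw [div_le_div_iff₀ (mul_pos hl hu) hu] at this
    nlinarith [Real.rpow_nonneg hNlu (1 / α)]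
  rwa [← Real.rpow_le_rpow_iff hNlu (mul_nonneg (Real.rpow_nonneg hl.le α) hNu)
      (one_div_pos.mpr hα), Real.mul_rpow (by positivity) hNu, ← Real.rpow_mul hl.le,
    mul_one_div_cancel hα.ne', Real.rpow_one]

theorem nwedge_two_mul_le (hN : MemN N) {α : ℝ} (hα : 0 < α)
    (hm : MonotoneOn (fun t => N t ^ (1 / α) / t) (Ioi 0)) {s : ℝ} (hs : 0 < s) :
    nwedge N (2 * s) ≤ 2 ^ (1 / α) * nwedge N s := by
  set u := ninv N (1 / s)
  set l : ℝ := 2 ^ (-(1 / α)) with hl_def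
  have hNu : N u = 1 / s := hN.apply_ninv_self (one_div_pos.mpr hs).le
  have hu : 0 < u := hN.ninv_pos (one_div_pos.mpr hs)
  have hl : 0 < l := by positivity
  have hl1 : l ≤ 1 := Real.rpow_le_one_of_one_le_of_nonpos one_le_two (by simp [hα.le])
  have hlα : l ^ α = 2⁻¹ := by
    rw [← Real.rpow_mul zero_le_two, neg_mul, one_div_mul_cancel hα.ne', Real.rpow_neg_one]
  have hlu : l * u ≤ ninv N (1 / (2 * s)) := by
    refine hN.le_ninv_of_apply_le (by positivity) (by positivity) ?_
    calc N (l * u) ≤ l ^ α * N u := hN.apply_mul_le hα hm hl hl1 hu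
      _ = 1 / (2 * s) := by rw [hlα, hNu]; field_simp
  calc nwedge N (2 * s) ≤ 1 / (l * u) := one_div_le_one_div_of_le (by positivity) hlu
    _ = 2 ^ (1 / α) * nwedge N s := by
      rw [show nwedge N s = 1 / u from rfl, hl_def, Real.rpow_neg zero_le_two]; field_simp

end MemN

theorem lintegral_Ioc_rpow_sub {θ : ℝ} (hθ : θ < 1) (t : ℝ) {r : ℝ} (hr : 0 ≤ r) :
    ∫⁻ s in Ioc t (t + r), ENNReal.ofReal ((s - t) ^ (-θ)) =
      ENNReal.ofReal (r ^ (1 - θ) / (1 - θ)) := by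
  have hint : IntervalIntegrable (fun s => (s - t) ^ (-θ)) volume t (t + r) := by
    simpa [add_comm] using (intervalIntegral.intervalIntegrable_rpow' (r := -θ) (by linarith)
      (a := 0) (b := r)).comp_sub_right t
  rw [← ofReal_integral_eq_lintegral_ofReal
    ((intervalIntegrable_iff_integrableOn_Ioc_of_le (by linarith)).mp hint)]
  · rw [← intervalIntegral.integral_of_le (by linarith),
      intervalIntegral.integral_comp_sub_right (fun x => x ^ (-θ)), sub_self,
      add_sub_cancel_left, integral_rpow (Or.inl (by linarith)),
      Real.zero_rpow (by linarith), neg_add_eq_sub]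
    ring_nf
  · filter_upwards [ae_restrict_mem measurableSet_Ioc] with s hs
    exact Real.rpow_nonneg (sub_nonneg.mpr hs.1.le) _

section ShiftedWeight

variable {w : ℝ → ℝ} {θ D t : ℝ}

theorem lintegral_Ioi_two_mul_inv_rpow_sub_mul_le (hθ0 : 0 ≤ θ) (hθ1 : θ ≤ 1) (ht : 0 < t)
    (hw_mono : MonotoneOn w (Ici t)) (hwt : 0 < w t) :
    ∫⁻ s in Ioi (2 * t), ENNReal.ofReal ((s - t) ^ θ * w s)⁻¹ ≤
      2 * ∫⁻ s in Ioi t, ENNReal.ofReal (s ^ θ * w s)⁻¹ := by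
  calc ∫⁻ s in Ioi (2 * t), ENNReal.ofReal ((s - t) ^ θ * w s)⁻¹
      ≤ ∫⁻ s in Ioi (2 * t), 2 * ENNReal.ofReal (s ^ θ * w s)⁻¹ := by
        refine setLIntegral_mono' measurableSet_Ioi fun s hs => ?_
        have hs : 2 * t < s := hs
        have hts : t ≤ s := by linarith
        have hws : 0 < w s := hwt.trans_le (hw_mono self_mem_Ici hts hts)
        have hpow : s ^ θ ≤ 2 * (s - t) ^ θ :=
          calc s ^ θ ≤ (2 * (s - t)) ^ θ := Real.rpow_le_rpow (by linarith) (by linarith) hθ0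
            _ = 2 ^ θ * (s - t) ^ θ := Real.mul_rpow zero_le_two (by linarith)
            _ ≤ 2 * (s - t) ^ θ := mul_le_mul_of_nonneg_right
              (Real.rpow_le_self_of_one_le one_le_two hθ1) (Real.rpow_nonneg (by linarith) θ)
        rw [← ENNReal.ofReal_ofNat 2, ← ENNReal.ofReal_mul zero_le_two]
        refine ENNReal.ofReal_le_ofReal ?_
        have hst : 0 < (s - t) ^ θ := Real.rpow_pos_of_pos (by linarith) θ
        have hs0 : 0 < s ^ θ := Real.rpow_pos_of_pos (by linarith) θ
        rw [inv_eq_one_div, inv_eq_one_div, ← mul_div_assoc, mul_one,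
          div_le_div_iff₀ (mul_pos hst hws) (mul_pos hs0 hws)]
        nlinarith
    _ = 2 * ∫⁻ s in Ioi (2 * t), ENNReal.ofReal (s ^ θ * w s)⁻¹ :=
        lintegral_const_mul' _ _ ENNReal.ofNat_ne_top
    _ ≤ 2 * ∫⁻ s in Ioi t, ENNReal.ofReal (s ^ θ * w s)⁻¹ := by
        gcongr
        exact le_mul_of_one_le_left ht.le one_le_two

theorem lintegral_Ioc_inv_rpow_sub_mul_le (hθ1 : θ < 1) (ht : 0 < t)
    (hw_mono : MonotoneOn w (Ici t)) (hwt : 0 < w t) :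
    ∫⁻ s in Ioc t (2 * t), ENNReal.ofReal ((s - t) ^ θ * w s)⁻¹ ≤
      ENNReal.ofReal ((w t)⁻¹ * (t ^ (1 - θ) / (1 - θ))) := by
  calc ∫⁻ s in Ioc t (2 * t), ENNReal.ofReal ((s - t) ^ θ * w s)⁻¹
      ≤ ∫⁻ s in Ioc t (t + t), ENNReal.ofReal (w t)⁻¹ * ENNReal.ofReal ((s - t) ^ (-θ)) := by
        rw [two_mul]
        refine setLIntegral_mono' measurableSet_Ioc fun s hs => ?_
        rw [← ENNReal.ofReal_mul (inv_nonneg.mpr hwt.le), Real.rpow_neg (by linarith [hs.1]),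
          ← mul_inv, mul_comm (w t)]
        exact ENNReal.ofReal_le_ofReal (inv_anti₀ (mul_pos (Real.rpow_pos_of_pos
          (by linarith [hs.1]) θ) hwt) (mul_le_mul_of_nonneg_left
            (hw_mono self_mem_Ici hs.1.le hs.1.le) (Real.rpow_nonneg
              (by linarith [hs.1]) θ)))
    _ = ENNReal.ofReal ((w t)⁻¹ * (t ^ (1 - θ) / (1 - θ))) := by
        rw [lintegral_const_mul' _ _ ENNReal.ofReal_ne_top, lintegral_Ioc_rpow_sub hθ1 t ht.le,
          ← ENNReal.ofReal_mul (inv_nonneg.mpr hwt.le)]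

theorem ofReal_le_lintegral_Ioc_inv_rpow_mul (hθ0 : 0 ≤ θ) (ht : 0 < t)
    (hw_mono : MonotoneOn w (Ici t)) (hwt : 0 < w t) :
    ENNReal.ofReal (((2 * t) ^ θ * w (2 * t))⁻¹ * t) ≤
      ∫⁻ s in Ioc t (2 * t), ENNReal.ofReal (s ^ θ * w s)⁻¹ := by
  have h2t : t ≤ 2 * t := by linarith
  have hw2t : 0 < w (2 * t) := hwt.trans_le (hw_mono self_mem_Ici h2t h2t)
  calc ENNReal.ofReal (((2 * t) ^ θ * w (2 * t))⁻¹ * t)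
      = ∫⁻ _ in Ioc t (2 * t), ENNReal.ofReal ((2 * t) ^ θ * w (2 * t))⁻¹ := by
        rw [setLIntegral_const, Real.volume_Ioc, ← ENNReal.ofReal_mul (by positivity)]
        ring_nf
    _ ≤ ∫⁻ s in Ioc t (2 * t), ENNReal.ofReal (s ^ θ * w s)⁻¹ := by
        refine setLIntegral_mono' measurableSet_Ioc fun s hs => ?_
        have hs0 : 0 < s := ht.trans hs.1
        have hws : w s ≤ w (2 * t) := hw_mono hs.1.le (hs.1.le.trans hs.2) hs.2
        exact ENNReal.ofReal_le_ofReal (inv_anti₀ (mul_pos (Real.rpow_pos_of_pos hs0 θ)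
          (hwt.trans_le (hw_mono self_mem_Ici hs.1.le hs.1.le)))
          (mul_le_mul (Real.rpow_le_rpow hs0.le hs.2 hθ0) hws (hwt.le.trans
            (hw_mono self_mem_Ici hs.1.le hs.1.le)) (by positivity)))

theorem lintegral_Ioi_inv_rpow_sub_mul_le (hθ0 : 0 ≤ θ) (hθ1 : θ < 1) (ht : 0 < t)
    (hw_mono : MonotoneOn w (Ici t)) (hwt : 0 < w t) (hw_double : w (2 * t) ≤ D * w t) :
    ∫⁻ s in Ioi t, ENNReal.ofReal ((s - t) ^ θ * w s)⁻¹ ≤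
      ENNReal.ofReal (4 * D / (1 - θ)) * ∫⁻ s in Ioi t, ENNReal.ofReal (s ^ θ * w s)⁻¹ := by
  set G := ∫⁻ s in Ioi t, ENNReal.ofReal (s ^ θ * w s)⁻¹
  have h1θ : 0 < 1 - θ := by linarith
  have h2t : t ≤ 2 * t := by linarith
  have hw2t : w t ≤ w (2 * t) := hw_mono self_mem_Ici h2t h2t
  have hD : 1 ≤ D := le_of_mul_le_mul_right (by linarith) hwt
  have hnear : ∫⁻ s in Ioc t (2 * t), ENNReal.ofReal ((s - t) ^ θ * w s)⁻¹ ≤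
      ENNReal.ofReal (2 * D / (1 - θ)) * G := by
    have hsplit : (2 * t) ^ θ * t ^ (1 - θ) = 2 ^ θ * t := by
      rw [Real.mul_rpow zero_le_two ht.le, mul_assoc, ← Real.rpow_add ht, add_sub_cancel,
        Real.rpow_one]
    have h2θ : 2 ^ θ ≤ (2 : ℝ) := Real.rpow_le_self_of_one_le one_le_two hθ1.le
    have h2tθ : 0 < (2 * t) ^ θ := by positivity
    calc ∫⁻ s in Ioc t (2 * t), ENNReal.ofReal ((s - t) ^ θ * w s)⁻¹
        ≤ ENNReal.ofReal ((w t)⁻¹ * (t ^ (1 - θ) / (1 - θ))) :=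
          lintegral_Ioc_inv_rpow_sub_mul_le hθ1 ht hw_mono hwt
      _ ≤ ENNReal.ofReal (2 * D / (1 - θ)) *
            ENNReal.ofReal (((2 * t) ^ θ * w (2 * t))⁻¹ * t) := by
          rw [← ENNReal.ofReal_mul (by positivity)]
          refine ENNReal.ofReal_le_ofReal ?_
          rw [← div_eq_inv_mul, div_div, ← div_eq_inv_mul, mul_div_assoc', div_le_div_iff₀
            (mul_pos h1θ hwt) (mul_pos h2tθ (hwt.trans_le hw2t))]
          calc t ^ (1 - θ) * ((2 * t) ^ θ * w (2 * t)) = 2 ^ θ * t * w (2 * t) := by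
                rw [← hsplit]; ring
            _ ≤ 2 * t * (D * w t) := by gcongr; exact hwt.le.trans hw2t
            _ = 2 * D / (1 - θ) * t * ((1 - θ) * w t) := by field_simp
      _ ≤ ENNReal.ofReal (2 * D / (1 - θ)) * G := by
          gcongr
          exact (ofReal_le_lintegral_Ioc_inv_rpow_mul hθ0 ht hw_mono hwt).trans
            (lintegral_mono_set Ioc_subset_Ioi_self)
  calc ∫⁻ s in Ioi t, ENNReal.ofReal ((s - t) ^ θ * w s)⁻¹
      = (∫⁻ s in Ioc t (2 * t), ENNReal.ofReal ((s - t) ^ θ * w s)⁻¹) +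
          ∫⁻ s in Ioi (2 * t), ENNReal.ofReal ((s - t) ^ θ * w s)⁻¹ := by
        rw [← lintegral_union measurableSet_Ioi Ioc_disjoint_Ioi_same, Ioc_union_Ioi_eq_Ioi h2t]
    _ ≤ ENNReal.ofReal (2 * D / (1 - θ)) * G + 2 * G :=
        add_le_add hnear (lintegral_Ioi_two_mul_inv_rpow_sub_mul_le hθ0 hθ1.le ht hw_mono hwt)
    _ = ENNReal.ofReal (2 * D / (1 - θ) + 2) * G := by
        rw [ENNReal.ofReal_add (by positivity) zero_le_two, ENNReal.ofReal_ofNat, add_mul]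
    _ ≤ ENNReal.ofReal (4 * D / (1 - θ)) * G := by
        gcongr
        rw [show 4 * D / (1 - θ) = 2 * D / (1 - θ) + 2 * D / (1 - θ) by ring]
        gcongr
        rw [le_div_iff₀ h1θ]
        nlinarith

end ShiftedWeight

theorem div_toReal_lt_one {p : ℝ} {p₀ : ℝ≥0∞} (hp : 0 ≤ p) (hpp₀ : ENNReal.ofReal p < p₀) :
    p / p₀.toReal < 1 := by
  rcases eq_or_ne p₀ ∞ with rfl | hp₀
  · simp
  · have hlt := (ENNReal.ofReal_lt_iff_lt_toReal hp hp₀).mp hpp₀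
    exact (div_lt_one (hp.trans_lt hlt)).mpr hlt

theorem rpow_one_div_le_mul {a b c p : ℝ} (ha : 1 ≤ a) (hb : 0 ≤ b) (hc : 0 < c) (hp : 1 ≤ p) :
    (a * b ^ p / c) ^ (1 / p) ≤ a * b * c ^ (-(1 / p)) := by
  have hp0 : 0 < p := one_pos.trans_le hp
  rw [Real.div_rpow (by positivity) hc.le, Real.mul_rpow (by positivity) (by positivity),
    one_div, Real.rpow_rpow_inv hb hp0.ne', Real.rpow_neg hc.le, div_eq_mul_inv]
  gcongr
  exact Real.rpow_le_self_of_one_le ha (inv_le_one_of_one_le₀ hp)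

theorem setLIntegral_inv_ofReal {f : ℝ → ℝ} {s : Set ℝ} (hs : MeasurableSet s)
    (hf : ∀ x ∈ s, 0 < f x) :
    ∫⁻ x in s, (ENNReal.ofReal (f x))⁻¹ = ∫⁻ x in s, ENNReal.ofReal (f x)⁻¹ :=
  setLIntegral_congr_fun hs fun x hx => (ENNReal.ofReal_inv_of_pos (hf x hx)).symm

/-- There is a universal constant `c > 0` such that for `1 ≤ p < p₀ ≤ ∞`
and `N ∈ 𝒩` with `N(t)^{1/α}/t` non-decreasing for some `α > 0`, for every `t > 0`:
`(∫_t^∞ ds/((s−t)^{p/p₀}·N^∧(s)^p))^{1/p}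
  ≤ c·2^{1/α}·(1−p/p₀)^{−1/p}·(∫_t^∞ ds/(s^{p/p₀}·N^∧(s)^p))^{1/p}`
(with `p/p₀` read as `0` when `p₀ = ∞`, via `p₀.toReal = 0`). -/
theorem shift_integral_comparison :
    ∃ c : ℝ, 0 < c ∧
      ∀ (N : ℝ → ℝ), MemN N →
      ∀ α : ℝ, 0 < α → MonotoneOn (fun t => N t ^ (1 / α) / t) (Ioi (0 : ℝ)) →
      ∀ (p : ℝ) (p₀ : ℝ≥0∞), 1 ≤ p → ENNReal.ofReal p < p₀ →
      ∀ t : ℝ, 0 < t →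
        (∫⁻ s in Ioi t,
            (ENNReal.ofReal ((s - t) ^ (p / p₀.toReal) * nwedge N s ^ p))⁻¹) ^ (1 / p) ≤
          ENNReal.ofReal (c * 2 ^ (1 / α) * (1 - p / p₀.toReal) ^ (-(1 / p))) *
            (∫⁻ s in Ioi t,
              (ENNReal.ofReal (s ^ (p / p₀.toReal) * nwedge N s ^ p))⁻¹) ^ (1 / p) := by
  refine ⟨4, four_pos, fun N hN α hα hm p p₀ hp hpp₀ t ht => ?_⟩
  have hp0 : 0 < p := one_pos.trans_le hp
  set θ := p / p₀.toReal
  have hθ0 : 0 ≤ θ := div_nonneg hp0.le ENNReal.toReal_nonneg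
  have h1θ : 0 < 1 - θ := sub_pos.mpr (div_toReal_lt_one hp0.le hpp₀)
  have hW : ∀ s, 0 < s → 0 < nwedge N s ^ p := fun s hs =>
    Real.rpow_pos_of_pos (hN.nwedge_pos hs) p
  have hW_mono : MonotoneOn (fun s => nwedge N s ^ p) (Ici t) := fun a ha b hb hab =>
    Real.rpow_le_rpow (hN.nwedge_pos (ht.trans_le ha)).le
      (hN.monotoneOn_nwedge (ht.trans_le ha) (ht.trans_le hb) hab) hp0.le
  have hW_double : nwedge N (2 * t) ^ p ≤ (2 ^ (1 / α)) ^ p * nwedge N t ^ p := by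
    rw [← Real.mul_rpow (by positivity) (hN.nwedge_pos ht).le]
    exact Real.rpow_le_rpow (hN.nwedge_pos (by positivity)).le
      (hN.nwedge_two_mul_le hα hm ht) hp0.le
  have key := lintegral_Ioi_inv_rpow_sub_mul_le hθ0 (by linarith) ht hW_mono (hW t ht) hW_double
  rw [setLIntegral_inv_ofReal measurableSet_Ioi fun s hs =>
      mul_pos (Real.rpow_pos_of_pos (sub_pos.mpr hs) θ) (hW s (ht.trans hs)),
    setLIntegral_inv_ofReal measurableSet_Ioi fun s hs =>
      mul_pos (Real.rpow_pos_of_pos (ht.trans hs) θ) (hW s (ht.trans hs))]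
  calc _ ≤ (ENNReal.ofReal (4 * (2 ^ (1 / α)) ^ p / (1 - θ)) *
        ∫⁻ s in Ioi t, ENNReal.ofReal (s ^ θ * nwedge N s ^ p)⁻¹) ^ (1 / p) :=
        ENNReal.rpow_le_rpow key (by positivity)
    _ = ENNReal.ofReal ((4 * (2 ^ (1 / α)) ^ p / (1 - θ)) ^ (1 / p)) *
        (∫⁻ s in Ioi t, ENNReal.ofReal (s ^ θ * nwedge N s ^ p)⁻¹) ^ (1 / p) := by
      rw [ENNReal.mul_rpow_of_nonneg _ _ (by positivity),
        ENNReal.ofReal_rpow_of_nonneg (by positivity) (by positivity)]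
    _ ≤ _ := by
      gcongr
      exact rpow_one_div_le_mul (by norm_num) (by positivity) h1θ hp

end
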